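/- (Lemma 5.2, characterization of the DBA-sGS-ALM iterates) In the DBA setting with θ ≡ 0 and θ̄_i ≡ 0 (so the variables v, v̄ are absent), let the augmented Lagrangian be L_σ(z,z̄,y,ȳ; x,x̄) = −⟨b,y⟩ − ⟨b̄,ȳ⟩ + δ_K*(−z) + δ_K̄*(−z̄) − (1/2σ)‖x‖² − (1/2σ)‖x̄‖² + (σ/2)‖A*y + B*ȳ + z − c + σ⁻¹x‖² + (σ/2)‖B̄*ȳ + z̄ − c̄ + σ⁻¹x̄‖². Let J : Y → Y and J̄ : Ȳ → Ȳ be self-adjoint positive semidefinite, let Q_{z̄z,y,ȳ} be the operator with block rows [I_X̄, 0, 0, B̄*], [0, I_X, A*, B*], [0, A, AA*+J, AB*], [B̄, B, BA*, BB*+B̄B̄*+J̄] acting on (z̄, z, y, ȳ), with strictly upper block triangular part U and block diagonal part D, and assume D is positive definite. Let S̃ = diag(0,0,J,J̄) + sGS(Q_{z̄z,y,ȳ}), where sGS(Q_{z̄z,y,ȳ}) = U D⁻¹ U*. Suppose w^{k+1} = (z^{k+1}, z̄^{k+1}, y^{k+1}, ȳ^{k+1}) is computed by the explicit sGS sweep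 of Step 1 of Algorithm DBA-sGS-ALM with error vectors δ^k_tmp, δ̄^k_tmp, δ^k, δ̄^k, and define Δ^k := (0; δ^k; δ̄^k) + U D⁻¹((0; δ^k; δ̄^k) − (0; δ^k_tmp; δ̄^k_tmp)) (zeros in the (z̄,z) block). Then w^{k+1} is the unique minimizer of w ↦ L_σ(w; x^k, x̄^k) + (σ/2)‖w − w^k‖²_{S̃} − ⟨Δ^k, w⟩, equivalently Δ^k ∈ ∂_w L_σ(w^{k+1}; x^k, x̄^k) + σ S̃(w^{k+1} − w^k). -/
import Mathlib


/- STATEMENT 2 (Lemma 5.2): characterization of the DBA-sGS-ALM iterates.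
   The DBA product spaces X̄, Ȳ are abstracted as finite-dimensional real inner
   product spaces `Xb`, `Yb` (θ ≡ 0 and θ̄ ≡ 0, so the variables v, v̄ are absent).
   The operator Q_{z̄z,y,ȳ} has the 3×3 block structure (grouping (z̄,z)) with
   strictly upper part U and block diagonal D = diag(I, AA*+J, BB*+B̄B̄*+J̄);
   the inverses EA = (AA*+J)⁻¹ and Minv = (BB*+B̄B̄*+J̄)⁻¹ are supplied as data
   with the two-sided inverse identities (no loss: D is positive definite).
   Writing U D⁻¹ out explicitly,
     Δ^k = ( B̄*M⁻¹(δ̄^k−δ̄^k_tmp),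
             A*(AA*+J)⁻¹(δ^k−δ^k_tmp) + B*M⁻¹(δ̄^k−δ̄^k_tmp),
             δ^k + A B*M⁻¹(δ̄^k−δ̄^k_tmp),
             δ̄^k )                                 in the blocks (z̄, z, y, ȳ),
   and for w = (z̄,z,y,ȳ),
     ⟨w, S̃w⟩ = ⟨Az, (AA*+J)⁻¹Az⟩ + ⟨g, M⁻¹g⟩ + ⟨y,Jy⟩ + ⟨ȳ,J̄ȳ⟩,
   with g = B̄z̄ + Bz + BA*y.  The argmin steps of the sGS sweep are expressed by
   their minimization property, the prox steps via `IsProxPt`, and the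
   subdifferential inclusion via the global subgradient inequality. -/

open scoped RealInnerProductSpace
open ContinuousLinearMap (adjoint)

noncomputable section

open Classical in
def indE {E : Type*} [NormedAddCommGroup E] [InnerProductSpace ℝ E]
    (K : Set E) (x : E) : EReal := if x ∈ K then 0 else ⊤

def conjFn {E : Type*} [NormedAddCommGroup E] [InnerProductSpace ℝ E]
    (f : E → EReal) (w : E) : EReal := ⨆ u, ((⟪w, u⟫ : ℝ) : EReal) - f u

def IsProxPt {E : Type*} [NormedAddCommGroup E] [InnerProductSpace ℝ E]
    (f : E → EReal) (w p : E) : Prop :=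
  ∀ u, f p + (((1:ℝ)/2 * ‖w - p‖^2 : ℝ) : EReal) ≤ f u + (((1:ℝ)/2 * ‖w - u‖^2 : ℝ) : EReal)

variable {X Y Xb Yb : Type*}
  [NormedAddCommGroup X] [InnerProductSpace ℝ X] [FiniteDimensional ℝ X]
  [NormedAddCommGroup Y] [InnerProductSpace ℝ Y] [FiniteDimensional ℝ Y]
  [NormedAddCommGroup Xb] [InnerProductSpace ℝ Xb] [FiniteDimensional ℝ Xb]
  [NormedAddCommGroup Yb] [InnerProductSpace ℝ Yb] [FiniteDimensional ℝ Yb]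

set_option maxHeartbeats 4000000

section helperlemmas

/-- Stationarity of the minimizer of a convex quadratic. -/
lemma stationary_aux {V W W' : Type*}
    [NormedAddCommGroup V] [InnerProductSpace ℝ V] [FiniteDimensional ℝ V]
    [NormedAddCommGroup W] [InnerProductSpace ℝ W] [FiniteDimensional ℝ W]
    [NormedAddCommGroup W'] [InnerProductSpace ℝ W'] [FiniteDimensional ℝ W']
    (σ : ℝ) (hσ : 0 < σ)
    (A : W →L[ℝ] V) (C : W' →L[ℝ] V) (J : V →L[ℝ] V) (hJsa : adjoint J = J)
    (hJpsd : ∀ v : V, 0 ≤ ⟪v, J v⟫)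
    (b δ : V) (h : W) (h' : W') (y0 y1 : V)
    (hmin : ∀ y : V,
      - ⟪b, y1⟫ + σ/2 * ‖adjoint A y1 + h‖^2 + σ/2 * ‖adjoint C y1 + h'‖^2
        + σ/2 * ⟪y1 - y0, J (y1 - y0)⟫ - ⟪δ, y1⟫ ≤
      - ⟪b, y⟫ + σ/2 * ‖adjoint A y + h‖^2 + σ/2 * ‖adjoint C y + h'‖^2
        + σ/2 * ⟪y - y0, J (y - y0)⟫ - ⟪δ, y⟫) :
    σ • (A (adjoint A y1 + h) + C (adjoint C y1 + h') + J (y1 - y0)) = b + δ := by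
  set g : V := σ • (A (adjoint A y1 + h) + C (adjoint C y1 + h') + J (y1 - y0)) - b - δ with hg
  have key : ∀ v : V, 0 ≤ ⟪g, v⟫ + σ/2 * (‖adjoint A v‖^2 + ‖adjoint C v‖^2 + ⟪v, J v⟫) := by
    intro v
    have h1 := hmin (y1 + v)
    have e1 : adjoint A (y1 + v) + h = (adjoint A y1 + h) + adjoint A v := by
      rw [map_add]; abel
    have e2 : adjoint C (y1 + v) + h' = (adjoint C y1 + h') + adjoint C v := by
      rw [map_add]; abel
    have e3 : y1 + v - y0 = (y1 - y0) + v := by abel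
    rw [e1, e2, e3] at h1
    have n1 : ‖(adjoint A y1 + h) + adjoint A v‖^2
        = ‖adjoint A y1 + h‖^2 + 2*⟪A (adjoint A y1 + h), v⟫ + ‖adjoint A v‖^2 := by
      rw [norm_add_sq_real]
      congr 2
      rw [← ContinuousLinearMap.adjoint_inner_right A]
    have n2 : ‖(adjoint C y1 + h') + adjoint C v‖^2
        = ‖adjoint C y1 + h'‖^2 + 2*⟪C (adjoint C y1 + h'), v⟫ + ‖adjoint C v‖^2 := by
      rw [norm_add_sq_real]
      congr 2
      rw [← ContinuousLinearMap.adjoint_inner_right C]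
    have n3 : ⟪(y1 - y0) + v, J ((y1 - y0) + v)⟫
        = ⟪y1 - y0, J (y1 - y0)⟫ + 2*⟪J (y1 - y0), v⟫ + ⟪v, J v⟫ := by
      rw [map_add, inner_add_left, inner_add_right, inner_add_right]
      have e : ⟪y1 - y0, J v⟫ = ⟪J (y1 - y0), v⟫ := by
        rw [← ContinuousLinearMap.adjoint_inner_left J, hJsa]
      have h2 : ⟪v, J (y1 - y0)⟫ = ⟪J (y1 - y0), v⟫ := real_inner_comm _ _
      rw [e, h2]; ring
    rw [n1, n2, n3, inner_add_right, inner_add_right] at h1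
    have hgv : ⟪g, v⟫ = σ * ⟪A (adjoint A y1 + h), v⟫ + σ * ⟪C (adjoint C y1 + h'), v⟫
        + σ * ⟪J (y1 - y0), v⟫ - ⟪b, v⟫ - ⟪δ, v⟫ := by
      rw [hg]
      simp only [inner_sub_left, inner_add_left, real_inner_smul_left]
      ring
    rw [hgv]
    linarith [h1]
  have hg0 : g = 0 := by
    by_contra hne
    have hpos : 0 < ‖g‖^2 := by
      have := norm_pos_iff.mpr hne
      positivity
    set Cst : ℝ := σ/2 * (‖adjoint A g‖^2 + ‖adjoint C g‖^2 + ⟪g, J g⟫) with hCst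
    have hC : 0 ≤ Cst := by
      have := hJpsd g
      have h2 : (0:ℝ) ≤ ‖adjoint A g‖^2 := sq_nonneg _
      have h3 : (0:ℝ) ≤ ‖adjoint C g‖^2 := sq_nonneg _
      positivity
    set t : ℝ := -(‖g‖^2/(2*(Cst+1))) with ht
    have hk := key (t • g)
    have e1 : ⟪g, t • g⟫ = t * ‖g‖^2 := by
      rw [real_inner_smul_right, real_inner_self_eq_norm_sq]
    have e2 : ‖adjoint A (t • g)‖^2 = t^2 * ‖adjoint A g‖^2 := by
      rw [map_smul, norm_smul, mul_pow, Real.norm_eq_abs, sq_abs]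
    have e3 : ‖adjoint C (t • g)‖^2 = t^2 * ‖adjoint C g‖^2 := by
      rw [map_smul, norm_smul, mul_pow, Real.norm_eq_abs, sq_abs]
    have e4 : ⟪t • g, J (t • g)⟫ = t^2 * ⟪g, J g⟫ := by
      rw [map_smul, real_inner_smul_left, real_inner_smul_right]
      ring
    rw [e1, e2, e3, e4] at hk
    have hk2 : 0 ≤ t * ‖g‖^2 + t^2 * Cst := by rw [hCst]; linarith [hk]
    have hCpos : (0:ℝ) < 2*(Cst+1) := by linarith
    rw [ht] at hk2
    have habs : ‖g‖^2/(2*(Cst+1)) * Cst < ‖g‖^2 := by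
      rw [div_mul_eq_mul_div, div_lt_iff₀ hCpos]
      nlinarith
    have hu : 0 < ‖g‖^2/(2*(Cst+1)) := div_pos hpos hCpos
    nlinarith [hk2, habs, hu, mul_pos hu hu]
  rw [hg] at hg0
  rwa [sub_sub, sub_eq_zero] at hg0

section support
variable {E : Type*} [NormedAddCommGroup E] [InnerProductSpace ℝ E]

lemma supp_lb (K : Set E) {x : E} (hx : x ∈ K) (w : E) :
    ((⟪w, x⟫ : ℝ) : EReal) ≤ conjFn (indE K) w := by
  refine le_trans ?_ (le_iSup (fun u => ((⟪w, u⟫ : ℝ) : EReal) - indE K u) x)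
  simp [indE, hx]

lemma supp_ub (K : Set E) (w : E) (r : ℝ) (h : ∀ x ∈ K, ⟪w, x⟫ ≤ r) :
    conjFn (indE K) w ≤ (r : EReal) := by
  unfold conjFn
  refine iSup_le fun x => ?_
  by_cases hx : x ∈ K
  · simpa [indE, hx] using (by exact_mod_cast h x hx : ((⟪w, x⟫:ℝ):EReal) ≤ (r:EReal))
  · simp [indE, hx]

lemma supp_zero (K : Set E) (hK : K.Nonempty) : conjFn (indE K) 0 = 0 := by
  obtain ⟨x₀, hx₀⟩ := hK
  refine le_antisymm ?_ ?_
  · have := supp_ub K 0 0 (fun x _ => by simp)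
    simpa using this
  · have := supp_lb K hx₀ 0
    simpa using this

lemma prox_support_subgrad (σ : ℝ) (hσ : 0 < σ) (K : Set E) (hK : K.Nonempty) (s p : E)
    (hp : IsProxPt (fun w => (σ⁻¹:ℝ) * conjFn (indE K) w) s p) :
    ∃ ρ : ℝ, conjFn (indE K) p = (ρ : EReal) ∧
      ∀ u : E, ((ρ + σ * ⟪s - p, u - p⟫ : ℝ) : EReal) ≤ conjFn (indE K) u := by
  obtain ⟨x₀, hx₀⟩ := hK
  have hσinv : (0:ℝ) < σ⁻¹ := inv_pos.mpr hσ
  have hptop : conjFn (indE K) p ≠ ⊤ := by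
    intro htop
    have h0 : (σ⁻¹:ℝ) * conjFn (indE K) p + (((1:ℝ)/2 * ‖s - p‖^2 : ℝ) : EReal)
        ≤ (σ⁻¹:ℝ) * conjFn (indE K) 0 + (((1:ℝ)/2 * ‖s - 0‖^2 : ℝ) : EReal) := hp 0
    rw [htop, supp_zero K ⟨x₀, hx₀⟩, mul_zero, zero_add,
      EReal.coe_mul_top_of_pos (by exact_mod_cast hσinv), EReal.top_add_coe] at h0
    exact (EReal.coe_lt_top _).not_ge h0
  have hpbot : conjFn (indE K) p ≠ ⊥ := by
    intro hbot
    have := supp_lb K hx₀ p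
    rw [hbot] at this
    simp at this
  refine ⟨(conjFn (indE K) p).toReal, (EReal.coe_toReal hptop hpbot).symm, ?_⟩
  set ρ : ℝ := (conjFn (indE K) p).toReal with hρdef
  have hρ : conjFn (indE K) p = (ρ : EReal) := (EReal.coe_toReal hptop hpbot).symm
  intro u
  by_cases hutop : conjFn (indE K) u = ⊤
  · rw [hutop]; exact le_top
  have hubot : conjFn (indE K) u ≠ ⊥ := by
    intro hbot
    have := supp_lb K hx₀ u
    rw [hbot] at this
    simp at this
  set r : ℝ := (conjFn (indE K) u).toReal with hrdef
  have hr : conjFn (indE K) u = (r : EReal) := (EReal.coe_toReal hutop hubot).symm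
  rw [hr, EReal.coe_le_coe_iff]
  have key : ∀ t : ℝ, 0 < t → t ≤ 1 →
      ⟪s - p, u - p⟫ ≤ σ⁻¹ * (r - ρ) + t/2 * ‖u - p‖^2 := by
    intro t ht ht1
    have hconv : conjFn (indE K) (p + t • (u - p)) ≤ (((1-t)*ρ + t*r : ℝ) : EReal) := by
      apply supp_ub
      intro x hx
      have h1 : ⟪p, x⟫ ≤ ρ := by
        have := supp_lb K hx p
        rw [hρ] at this
        exact_mod_cast this
      have h2 : ⟪u, x⟫ ≤ r := by
        have := supp_lb K hx u
        rw [hr] at this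
        exact_mod_cast this
      have hexp : ⟪p + t • (u - p), x⟫ = (1-t)*⟪p, x⟫ + t*⟪u, x⟫ := by
        rw [inner_add_left, real_inner_smul_left, inner_sub_left]
        ring
      rw [hexp]
      nlinarith
    have hprox : (σ⁻¹:ℝ) * conjFn (indE K) p + (((1:ℝ)/2 * ‖s - p‖^2 : ℝ) : EReal)
        ≤ (σ⁻¹:ℝ) * conjFn (indE K) (p + t • (u - p))
          + (((1:ℝ)/2 * ‖s - (p + t • (u - p))‖^2 : ℝ) : EReal) := hp _
    rw [hρ, ← EReal.coe_mul] at hprox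
    have hmul : (σ⁻¹:ℝ) * conjFn (indE K) (p + t • (u - p))
        ≤ ((σ⁻¹ * ((1-t)*ρ + t*r) : ℝ) : EReal) := by
      rw [EReal.coe_mul]
      exact mul_le_mul_of_nonneg_left hconv (by exact_mod_cast le_of_lt hσinv)
    have hchain := le_trans hprox (add_le_add hmul (le_refl _))
    rw [← EReal.coe_add, ← EReal.coe_add] at hchain
    have hre : σ⁻¹ * ρ + (1:ℝ)/2 * ‖s - p‖^2
        ≤ σ⁻¹ * ((1-t)*ρ + t*r) + (1:ℝ)/2 * ‖s - (p + t • (u - p))‖^2 := by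
      exact_mod_cast hchain
    have hnorm : ‖s - (p + t • (u - p))‖^2
        = ‖s - p‖^2 - 2*t*⟪s - p, u - p⟫ + t^2*‖u - p‖^2 := by
      have e : s - (p + t • (u - p)) = (s - p) - t • (u - p) := by abel
      rw [e, norm_sub_sq_real, real_inner_smul_right, norm_smul, mul_pow,
        Real.norm_eq_abs, sq_abs]
      ring
    rw [hnorm] at hre
    nlinarith [hre, ht, mul_pos ht ht]
  have main : σ * ⟪s - p, u - p⟫ ≤ r - ρ := by
    have h2 : ⟪s - p, u - p⟫ ≤ σ⁻¹ * (r - ρ) := by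
      apply le_of_forall_pos_le_add
      intro ε hε
      have hq : (0:ℝ) < ‖u - p‖^2 + 1 := by positivity
      set t : ℝ := min 1 (2*ε/(‖u - p‖^2 + 1)) with htdef
      have ht0 : 0 < t := lt_min one_pos (by positivity)
      have ht1 : t ≤ 1 := min_le_left _ _
      have hk := key t ht0 ht1
      have htb : t ≤ 2*ε/(‖u - p‖^2 + 1) := min_le_right _ _
      have : t/2 * ‖u - p‖^2 ≤ ε := by
        rw [le_div_iff₀ hq] at htb
        nlinarith [sq_nonneg (‖u - p‖), ht0]
      linarith
    have := mul_le_mul_of_nonneg_left h2 (le_of_lt hσ)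
    rw [← mul_assoc, mul_inv_cancel₀ (ne_of_gt hσ), one_mul] at this
    exact this
  linarith

end support

end helperlemmas

/-- The augmented Lagrangian of (D) in the ALM setting (θ ≡ 0, θ̄ ≡ 0), in the
variables (z, z̄, y, ȳ; x, x̄). -/
def LsigALM (σ : ℝ) (K : Set X) (Kb : Set Xb)
    (b : Y) (bb : Yb) (c : X) (cb : Xb)
    (A : X →L[ℝ] Y) (B : X →L[ℝ] Yb) (Bb : Xb →L[ℝ] Yb)
    (z : X) (zb : Xb) (y : Y) (yb : Yb) (x : X) (xb : Xb) : EReal :=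
  conjFn (indE K) (-z) + conjFn (indE Kb) (-zb) +
  ((- ⟪b, y⟫ - ⟪bb, yb⟫ - 1/(2*σ) * ‖x‖^2 - 1/(2*σ) * ‖xb‖^2
    + σ/2 * ‖adjoint A y + adjoint B yb + z - c + σ⁻¹ • x‖^2
    + σ/2 * ‖adjoint Bb yb + zb - cb + σ⁻¹ • xb‖^2 : ℝ) : EReal)

theorem DBA_sGS_ALM_iterate_characterization
    (σ : ℝ) (hσ : 0 < σ)
    (K : Set X) (hKne : K.Nonempty) (hKcl : IsClosed K) (hKcv : Convex ℝ K)
    (Kb : Set Xb) (hKbne : Kb.Nonempty) (hKbcl : IsClosed Kb) (hKbcv : Convex ℝ Kb)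
    (b : Y) (bb : Yb) (c : X) (cb : Xb)
    (A : X →L[ℝ] Y) (B : X →L[ℝ] Yb) (Bb : Xb →L[ℝ] Yb)
    (J : Y →L[ℝ] Y) (hJsa : adjoint J = J) (hJpsd : ∀ y : Y, 0 ≤ ⟪y, J y⟫)
    (Jb : Yb →L[ℝ] Yb) (hJbsa : adjoint Jb = Jb) (hJbpsd : ∀ w : Yb, 0 ≤ ⟪w, Jb w⟫)
    -- the block diagonal part D is positive definite, with the inverses EA, Minv
    (hDμpd : ∀ y : Y, y ≠ 0 → 0 < ⟪y, A (adjoint A y) + J y⟫)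
    (M : Yb →L[ℝ] Yb) (hM : M = B.comp (adjoint B) + Bb.comp (adjoint Bb) + Jb)
    (hDνpd : ∀ w : Yb, w ≠ 0 → 0 < ⟪w, M w⟫)
    (EA : Y →L[ℝ] Y)
    (hEA₁ : (A.comp (adjoint A) + J).comp EA = ContinuousLinearMap.id ℝ Y)
    (hEA₂ : EA.comp (A.comp (adjoint A) + J) = ContinuousLinearMap.id ℝ Y)
    (Minv : Yb →L[ℝ] Yb)
    (hMinv₁ : M.comp Minv = ContinuousLinearMap.id ℝ Yb)
    (hMinv₂ : Minv.comp M = ContinuousLinearMap.id ℝ Yb)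
    -- current iterate and error vectors
    (z0 : X) (zb0 : Xb) (y0 : Y) (yb0 : Yb) (x0 : X) (xb0 : Xb)
    (δtmp δ : Y) (δbtmp δb : Yb)
    (ck : X) (hck : ck = c - σ⁻¹ • x0)
    (cbk : Xb) (hcbk : cbk = cb - σ⁻¹ • xb0)
    -- Step 1 of DBA-sGS-ALM (the explicit sGS sweep)
    (ybtmp : Yb)
    (hybtmp : ∀ yb : Yb,
      - ⟪bb, ybtmp⟫ + σ/2 * ‖adjoint B ybtmp + adjoint A y0 + z0 - ck‖^2
        + σ/2 * ‖adjoint Bb ybtmp + zb0 - cbk‖^2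
        + σ/2 * ⟪ybtmp - yb0, Jb (ybtmp - yb0)⟫ - ⟪δbtmp, ybtmp⟫ ≤
      - ⟪bb, yb⟫ + σ/2 * ‖adjoint B yb + adjoint A y0 + z0 - ck‖^2
        + σ/2 * ‖adjoint Bb yb + zb0 - cbk‖^2
        + σ/2 * ⟪yb - yb0, Jb (yb - yb0)⟫ - ⟪δbtmp, yb⟫)
    (ytmp : Y)
    (hytmp : ∀ y : Y,
      - ⟪b, ytmp⟫ + σ/2 * ‖adjoint A ytmp + adjoint B ybtmp + z0 - ck‖^2
        + σ/2 * ⟪ytmp - y0, J (ytmp - y0)⟫ - ⟪δtmp, ytmp⟫ ≤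
      - ⟪b, y⟫ + σ/2 * ‖adjoint A y + adjoint B ybtmp + z0 - ck‖^2
        + σ/2 * ⟪y - y0, J (y - y0)⟫ - ⟪δtmp, y⟫)
    (z1 : X)
    (hz1 : IsProxPt (fun w => (σ⁻¹ : ℝ) * conjFn (indE K) w)
      (adjoint A ytmp + adjoint B ybtmp - ck) (-z1))
    (zb1 : Xb)
    (hzb1 : IsProxPt (fun w => (σ⁻¹ : ℝ) * conjFn (indE Kb) w)
      (adjoint Bb ybtmp - cbk) (-zb1))
    (y1 : Y)
    (hy1 : ∀ y : Y,
      - ⟪b, y1⟫ + σ/2 * ‖adjoint A y1 + adjoint B ybtmp + z1 - ck‖^2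
        + σ/2 * ⟪y1 - y0, J (y1 - y0)⟫ - ⟪δ, y1⟫ ≤
      - ⟪b, y⟫ + σ/2 * ‖adjoint A y + adjoint B ybtmp + z1 - ck‖^2
        + σ/2 * ⟪y - y0, J (y - y0)⟫ - ⟪δ, y⟫)
    (yb1 : Yb)
    (hyb1 : ∀ yb : Yb,
      - ⟪bb, yb1⟫ + σ/2 * ‖adjoint B yb1 + adjoint A y1 + z1 - ck‖^2
        + σ/2 * ‖adjoint Bb yb1 + zb1 - cbk‖^2
        + σ/2 * ⟪yb1 - yb0, Jb (yb1 - yb0)⟫ - ⟪δb, yb1⟫ ≤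
      - ⟪bb, yb⟫ + σ/2 * ‖adjoint B yb + adjoint A y1 + z1 - ck‖^2
        + σ/2 * ‖adjoint Bb yb + zb1 - cbk‖^2
        + σ/2 * ⟪yb - yb0, Jb (yb - yb0)⟫ - ⟪δb, yb⟫)
    -- the perturbation vector Δ^k = (0;δ^k;δ̄^k) + U D⁻¹((0;δ^k;δ̄^k) − (0;δ^k_tmp;δ̄^k_tmp))
    (Δzb : Xb) (hΔzb : Δzb = adjoint Bb (Minv (δb - δbtmp)))
    (Δz : X) (hΔz : Δz = adjoint A (EA (δ - δtmp)) + adjoint B (Minv (δb - δbtmp)))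
    (Δy : Y) (hΔy : Δy = δ + A (adjoint B (Minv (δb - δbtmp))))
    (Δyb : Yb) (hΔyb : Δyb = δb)
    -- the perturbed proximal objective of Lemma 5.2
    (FW : X → Xb → Y → Yb → EReal)
    (hFW : ∀ z zb y yb, FW z zb y yb =
      LsigALM σ K Kb b bb c cb A B Bb z zb y yb x0 xb0 +
      ((σ/2 * (⟪A (z - z0), EA (A (z - z0))⟫
          + ⟪Bb (zb - zb0) + B (z - z0) + B (adjoint A (y - y0)),
              Minv (Bb (zb - zb0) + B (z - z0) + B (adjoint A (y - y0)))⟫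
          + ⟪y - y0, J (y - y0)⟫ + ⟪yb - yb0, Jb (yb - yb0)⟫)
        - (⟪Δzb, zb⟫ + ⟪Δz, z⟫ + ⟪Δy, y⟫ + ⟪Δyb, yb⟫) : ℝ) : EReal)) :
    -- w^{k+1} = (z^{k+1}, z̄^{k+1}, y^{k+1}, ȳ^{k+1}) is the unique minimizer of FW
    ((∀ (z : X) (zb : Xb) (y : Y) (yb : Yb), FW z1 zb1 y1 yb1 ≤ FW z zb y yb) ∧
     (∀ (z : X) (zb : Xb) (y : Y) (yb : Yb),
        (∀ (z' : X) (zb' : Xb) (y' : Y) (yb' : Yb), FW z zb y yb ≤ FW z' zb' y' yb') →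
        z = z1 ∧ zb = zb1 ∧ y = y1 ∧ yb = yb1)) ∧
    -- Δ^k ∈ ∂_w L_σ(w^{k+1}; x^k, x̄^k) + σ S̃(w^{k+1} − w^k)
    (∀ (z : X) (zb : Xb) (y : Y) (yb : Yb),
      LsigALM σ K Kb b bb c cb A B Bb z1 zb1 y1 yb1 x0 xb0 +
        ((⟪Δz - σ • (adjoint A (EA (A (z1 - z0)))
              + adjoint B (Minv (Bb (zb1 - zb0) + B (z1 - z0) + B (adjoint A (y1 - y0))))),
            z - z1⟫
          + ⟪Δzb - σ • adjoint Bb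
              (Minv (Bb (zb1 - zb0) + B (z1 - z0) + B (adjoint A (y1 - y0)))), zb - zb1⟫
          + ⟪Δy - σ • (A (adjoint B
              (Minv (Bb (zb1 - zb0) + B (z1 - z0) + B (adjoint A (y1 - y0)))))
              + J (y1 - y0)), y - y1⟫
          + ⟪Δyb - σ • Jb (yb1 - yb0), yb - yb1⟫ : ℝ) : EReal) ≤
      LsigALM σ K Kb b bb c cb A B Bb z zb y yb x0 xb0) := by

  classical
  -- ## 1. Stationarity equations from the four quadratic minimizations
  have hadj0 : adjoint (0 : X →L[ℝ] Y) = 0 := by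
    ext v
    simp [ContinuousLinearMap.adjoint_inner_left]
  have E2' : σ • (B (adjoint B ybtmp + (adjoint A y0 + z0 - ck))
      + Bb (adjoint Bb ybtmp + (zb0 - cbk)) + Jb (ybtmp - yb0)) = bb + δbtmp := by
    apply stationary_aux σ hσ B Bb Jb hJbsa hJbpsd bb δbtmp _ _ yb0 ybtmp
    intro yb
    have e1 : ∀ w : Yb, adjoint B w + (adjoint A y0 + z0 - ck)
        = adjoint B w + adjoint A y0 + z0 - ck := fun w => by abel
    have e2 : ∀ w : Yb, adjoint Bb w + (zb0 - cbk) = adjoint Bb w + zb0 - cbk :=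
      fun w => by abel
    rw [e1, e1, e2, e2]
    exact hybtmp yb
  have E2 : σ • (B (adjoint B yb1 + (adjoint A y1 + z1 - ck))
      + Bb (adjoint Bb yb1 + (zb1 - cbk)) + Jb (yb1 - yb0)) = bb + δb := by
    apply stationary_aux σ hσ B Bb Jb hJbsa hJbpsd bb δb _ _ yb0 yb1
    intro yb
    have e1 : ∀ w : Yb, adjoint B w + (adjoint A y1 + z1 - ck)
        = adjoint B w + adjoint A y1 + z1 - ck := fun w => by abel
    have e2 : ∀ w : Yb, adjoint Bb w + (zb1 - cbk) = adjoint Bb w + zb1 - cbk :=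
      fun w => by abel
    rw [e1, e1, e2, e2]
    exact hyb1 yb
  have E1' : σ • (A (adjoint A ytmp + (adjoint B ybtmp + z0 - ck)) + J (ytmp - y0))
      = b + δtmp := by
    have h0 := stationary_aux σ hσ A (0 : X →L[ℝ] Y) J hJsa hJpsd b δtmp
      (adjoint B ybtmp + z0 - ck) (0 : X) y0 ytmp ?_
    · rw [hadj0] at h0
      simpa using h0
    intro y
    have e1 : ∀ w : Y, adjoint A w + (adjoint B ybtmp + z0 - ck)
        = adjoint A w + adjoint B ybtmp + z0 - ck := fun w => by abel
    simp only [hadj0, ContinuousLinearMap.zero_apply, add_zero, norm_zero]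
    rw [e1, e1]
    have := hytmp y
    ring_nf
    ring_nf at this
    linarith [this]
  have E1 : σ • (A (adjoint A y1 + (adjoint B ybtmp + z1 - ck)) + J (y1 - y0))
      = b + δ := by
    have h0 := stationary_aux σ hσ A (0 : X →L[ℝ] Y) J hJsa hJpsd b δ
      (adjoint B ybtmp + z1 - ck) (0 : X) y0 y1 ?_
    · rw [hadj0] at h0
      simpa using h0
    intro y
    have e1 : ∀ w : Y, adjoint A w + (adjoint B ybtmp + z1 - ck)
        = adjoint A w + adjoint B ybtmp + z1 - ck := fun w => by abel
    simp only [hadj0, ContinuousLinearMap.zero_apply, add_zero, norm_zero]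
    rw [e1, e1]
    have := hy1 y
    ring_nf
    ring_nf at this
    linarith [this]
  -- ## 2. Operator facts
  have hMu : ∀ u : Yb, M u = B (adjoint B u) + Bb (adjoint Bb u) + Jb u := by
    intro u
    rw [hM]
    simp [ContinuousLinearMap.add_apply, ContinuousLinearMap.comp_apply]
  have hTu : ∀ u : Y, (A.comp (adjoint A) + J) u = A (adjoint A u) + J u := by
    intro u
    simp [ContinuousLinearMap.add_apply, ContinuousLinearMap.comp_apply]
  have hMapp : ∀ u : Yb, Minv (M u) = u := by
    intro u
    have := congrArg (fun (T : Yb →L[ℝ] Yb) => T u) hMinv₂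
    simpa using this
  have hMapp' : ∀ u : Yb, M (Minv u) = u := by
    intro u
    have := congrArg (fun (T : Yb →L[ℝ] Yb) => T u) hMinv₁
    simpa using this
  have hEapp : ∀ u : Y, EA ((A.comp (adjoint A) + J) u) = u := by
    intro u
    have := congrArg (fun (T : Y →L[ℝ] Y) => T u) hEA₂
    simpa using this
  have hEapp' : ∀ u : Y, (A.comp (adjoint A) + J) (EA u) = u := by
    intro u
    have := congrArg (fun (T : Y →L[ℝ] Y) => T u) hEA₁
    simpa using this
  have hMsa : adjoint M = M := by
    rw [hM, map_add, map_add, ContinuousLinearMap.adjoint_comp,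
      ContinuousLinearMap.adjoint_adjoint, ContinuousLinearMap.adjoint_comp,
      ContinuousLinearMap.adjoint_adjoint, hJbsa]
  have hTsa : adjoint (A.comp (adjoint A) + J) = A.comp (adjoint A) + J := by
    rw [map_add, ContinuousLinearMap.adjoint_comp, ContinuousLinearMap.adjoint_adjoint, hJsa]
  have hMinvsa : adjoint Minv = Minv := by
    calc adjoint Minv = (adjoint Minv).comp (M.comp Minv) := by
          rw [hMinv₁, ContinuousLinearMap.comp_id]
      _ = ((adjoint Minv).comp (adjoint M)).comp Minv := by
          rw [← ContinuousLinearMap.comp_assoc, hMsa]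
      _ = (adjoint (M.comp Minv)).comp Minv := by
          rw [ContinuousLinearMap.adjoint_comp]
      _ = Minv := by
          rw [hMinv₁, ContinuousLinearMap.adjoint_id, ContinuousLinearMap.id_comp]
  have hEAsa : adjoint EA = EA := by
    calc adjoint EA = (adjoint EA).comp ((A.comp (adjoint A) + J).comp EA) := by
          rw [hEA₁, ContinuousLinearMap.comp_id]
      _ = ((adjoint EA).comp (adjoint (A.comp (adjoint A) + J))).comp EA := by
          rw [← ContinuousLinearMap.comp_assoc, hTsa]
      _ = (adjoint ((A.comp (adjoint A) + J).comp EA)).comp EA := by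
          rw [ContinuousLinearMap.adjoint_comp]
      _ = EA := by
          rw [hEA₁, ContinuousLinearMap.adjoint_id, ContinuousLinearMap.id_comp]
  have hEA_symm : ∀ u w : Y, ⟪u, EA w⟫ = ⟪EA u, w⟫ := by
    intro u w
    have := ContinuousLinearMap.adjoint_inner_left EA w u
    rw [hEAsa] at this
    exact this.symm
  have hMinv_symm : ∀ u w : Yb, ⟪u, Minv w⟫ = ⟪Minv u, w⟫ := by
    intro u w
    have := ContinuousLinearMap.adjoint_inner_left Minv w u
    rw [hMinvsa] at this
    exact this.symm
  have hJ_symm : ∀ u w : Y, ⟪u, J w⟫ = ⟪J u, w⟫ := by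
    intro u w
    have := ContinuousLinearMap.adjoint_inner_left J w u
    rw [hJsa] at this
    exact this.symm
  have hJb_symm : ∀ u w : Yb, ⟪u, Jb w⟫ = ⟪Jb u, w⟫ := by
    intro u w
    have := ContinuousLinearMap.adjoint_inner_left Jb w u
    rw [hJbsa] at this
    exact this.symm
  have hTpsd : ∀ v : Y, 0 ≤ ⟪v, A (adjoint A v) + J v⟫ := by
    intro v
    rcases eq_or_ne v 0 with h | h
    · simp [h]
    · exact le_of_lt (hDμpd v h)
  have hMpsd : ∀ v : Yb, 0 ≤ ⟪v, M v⟫ := by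
    intro v
    rcases eq_or_ne v 0 with h | h
    · simp [h]
    · exact le_of_lt (hDνpd v h)
  have hEApsd : ∀ u : Y, 0 ≤ ⟪u, EA u⟫ := by
    intro u
    have h1 : A (adjoint A (EA u)) + J (EA u) = u := by
      have := hEapp' u
      rw [hTu] at this
      exact this
    calc (0:ℝ) ≤ ⟪EA u, A (adjoint A (EA u)) + J (EA u)⟫ := hTpsd _
      _ = ⟪EA u, u⟫ := by rw [h1]
      _ = ⟪u, EA u⟫ := real_inner_comm _ _
  have hMinvpsd : ∀ u : Yb, 0 ≤ ⟪u, Minv u⟫ := by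
    intro u
    have h1 : M (Minv u) = u := hMapp' u
    calc (0:ℝ) ≤ ⟪Minv u, M (Minv u)⟫ := hMpsd _
      _ = ⟪Minv u, u⟫ := by rw [h1]
      _ = ⟪u, Minv u⟫ := real_inner_comm _ _
  have hEAzero : ∀ u : Y, ⟪u, EA u⟫ = 0 → u = 0 := by
    intro u h
    by_contra hu
    have hv : EA u ≠ 0 := by
      intro h0
      apply hu
      rw [← hEapp' u, h0, map_zero]
    have hlt := hDμpd (EA u) hv
    have h1 : A (adjoint A (EA u)) + J (EA u) = u := by
      have := hEapp' u
      rw [hTu] at this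
      exact this
    rw [h1] at hlt
    rw [real_inner_comm] at h
    exact absurd h (ne_of_gt hlt)
  have hMinvzero : ∀ u : Yb, ⟪u, Minv u⟫ = 0 → u = 0 := by
    intro u h
    by_contra hu
    have hv : Minv u ≠ 0 := by
      intro h0
      apply hu
      rw [← hMapp' u, h0, map_zero]
    have hlt := hDνpd (Minv u) hv
    rw [hMapp' u] at hlt
    rw [real_inner_comm] at h
    exact absurd h (ne_of_gt hlt)
  -- ## 3. The sGS relations between the error vectors
  have hMval : Minv (δb - δbtmp) = σ • (yb1 - ybtmp) + σ • Minv (Bb (zb1 - zb0) + B (z1 - z0) + B (adjoint A (y1 - y0))) := by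
    have star : δb - δbtmp = σ • (M (yb1 - ybtmp)) + σ • (Bb (zb1 - zb0) + B (z1 - z0) + B (adjoint A (y1 - y0))) := by
      have e0 : δb - δbtmp = (bb + δb) - (bb + δbtmp) := by abel
      rw [e0, ← E2, ← E2', hMu]
      simp only [map_add, map_sub, smul_add, smul_sub]
      module
    rw [star, map_add, map_smul, map_smul, hMapp]
  have hEval : EA (δ - δtmp) = σ • (y1 - ytmp) + σ • EA (A (z1 - z0)) := by
    have star : δ - δtmp = σ • ((A.comp (adjoint A) + J) (y1 - ytmp)) + σ • (A (z1 - z0)) := by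
      have e0 : δ - δtmp = (b + δ) - (b + δtmp) := by abel
      rw [e0, ← E1, ← E1', hTu]
      simp only [map_add, map_sub, smul_add, smul_sub]
      module
    rw [star, map_add, map_smul, map_smul, hEapp]
  -- ## 4. Closed forms for the G-vectors
  have F1 : Δz - σ • (adjoint A (EA (A (z1 - z0))) + adjoint B (Minv (Bb (zb1 - zb0) + B (z1 - z0) + B (adjoint A (y1 - y0))))) = σ • (adjoint A y1 + adjoint B yb1 + z1 - ck) - σ • (adjoint A ytmp + adjoint B ybtmp - ck + z1) := by
    rw [hΔz, hEval, hMval]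
    simp only [map_add, map_smul, map_sub, smul_add, smul_sub]
    module
  have F2 : Δzb - σ • adjoint Bb (Minv (Bb (zb1 - zb0) + B (z1 - z0) + B (adjoint A (y1 - y0)))) = σ • (adjoint Bb yb1 + zb1 - cbk) - σ • (adjoint Bb ybtmp - cbk + zb1) := by
    rw [hΔzb, hMval]
    simp only [map_add, map_smul, map_sub, smul_add, smul_sub]
    module
  have F3 : Δy - σ • (A (adjoint B (Minv (Bb (zb1 - zb0) + B (z1 - z0) + B (adjoint A (y1 - y0))))) + J (y1 - y0)) = σ • (A (adjoint A y1 + adjoint B yb1 + z1 - ck)) - b := by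
    have hδ : δ = σ • (A (adjoint A y1 + (adjoint B ybtmp + z1 - ck)) + J (y1 - y0)) - b := by
      rw [E1]; abel
    rw [hΔy, hMval, hδ]
    simp only [map_add, map_smul, map_sub, smul_add, smul_sub]
    module
  have F4 : Δyb - σ • Jb (yb1 - yb0) = σ • (B (adjoint A y1 + adjoint B yb1 + z1 - ck)) + σ • (Bb (adjoint Bb yb1 + zb1 - cbk)) - bb := by
    have hδb : δb = σ • (B (adjoint B yb1 + (adjoint A y1 + z1 - ck))
        + Bb (adjoint Bb yb1 + (zb1 - cbk)) + Jb (yb1 - yb0)) - bb := by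
      rw [E2]; abel
    rw [hΔyb, hδb]
    simp only [map_add, map_smul, map_sub, smul_add, smul_sub]
    module
  -- ## 5. Prox subgradient inequalities
  obtain ⟨ρ1, hρ1, hsub1⟩ := prox_support_subgrad σ hσ K hKne _ _ hz1
  obtain ⟨ρ2, hρ2, hsub2⟩ := prox_support_subgrad σ hσ Kb hKbne _ _ hzb1
  -- ## 6. Rewriting the augmented Lagrangian
  have harg1 : ∀ (z : X) (y : Y) (yb : Yb),
      adjoint A y + adjoint B yb + z - c + σ⁻¹ • x0 = adjoint A y + adjoint B yb + z - ck := by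
    intro z y yb
    rw [hck]
    abel
  have harg2 : ∀ (zb : Xb) (yb : Yb),
      adjoint Bb yb + zb - cb + σ⁻¹ • xb0 = adjoint Bb yb + zb - cbk := by
    intro zb yb
    rw [hcbk]
    abel
  have hL : ∀ (z : X) (zb : Xb) (y : Y) (yb : Yb),
      LsigALM σ K Kb b bb c cb A B Bb z zb y yb x0 xb0
      = conjFn (indE K) (-z) + conjFn (indE Kb) (-zb)
        + ((- ⟪b, y⟫ - ⟪bb, yb⟫ - 1/(2*σ) * ‖x0‖^2 - 1/(2*σ) * ‖xb0‖^2 + σ/2 * ‖adjoint A y + adjoint B yb + z - ck‖^2 + σ/2 * ‖adjoint Bb yb + zb - cbk‖^2 : ℝ) : EReal) := by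
    intro z zb y yb
    rw [LsigALM, harg1, harg2]
  -- ## 7. Quadratic expansions
  have hexp1 : ∀ (z : X) (y : Y) (yb : Yb),
      ‖adjoint A y + adjoint B yb + z - ck‖^2
      = ‖adjoint A y1 + adjoint B yb1 + z1 - ck‖^2
        + 2*(⟪A (adjoint A y1 + adjoint B yb1 + z1 - ck), y - y1⟫ + ⟪B (adjoint A y1 + adjoint B yb1 + z1 - ck), yb - yb1⟫ + ⟪adjoint A y1 + adjoint B yb1 + z1 - ck, z - z1⟫)
        + ‖adjoint A (y - y1) + adjoint B (yb - yb1) + (z - z1)‖^2 := by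
    intro z y yb
    have e : adjoint A y + adjoint B yb + z - ck
        = (adjoint A y1 + adjoint B yb1 + z1 - ck) + (adjoint A (y - y1) + adjoint B (yb - yb1) + (z - z1)) := by
      simp only [map_sub]
      abel
    rw [e, norm_add_sq_real]
    have ecross : ⟪adjoint A y1 + adjoint B yb1 + z1 - ck, adjoint A (y - y1) + adjoint B (yb - yb1) + (z - z1)⟫
        = ⟪A (adjoint A y1 + adjoint B yb1 + z1 - ck), y - y1⟫ + ⟪B (adjoint A y1 + adjoint B yb1 + z1 - ck), yb - yb1⟫ + ⟪adjoint A y1 + adjoint B yb1 + z1 - ck, z - z1⟫ := by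
      rw [inner_add_right, inner_add_right, ContinuousLinearMap.adjoint_inner_right,
        ContinuousLinearMap.adjoint_inner_right]
    rw [ecross]
  have hexp2 : ∀ (zb : Xb) (yb : Yb),
      ‖adjoint Bb yb + zb - cbk‖^2
      = ‖adjoint Bb yb1 + zb1 - cbk‖^2
        + 2*(⟪Bb (adjoint Bb yb1 + zb1 - cbk), yb - yb1⟫ + ⟪adjoint Bb yb1 + zb1 - cbk, zb - zb1⟫)
        + ‖adjoint Bb (yb - yb1) + (zb - zb1)‖^2 := by
    intro zb yb
    have e : adjoint Bb yb + zb - cbk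
        = (adjoint Bb yb1 + zb1 - cbk) + (adjoint Bb (yb - yb1) + (zb - zb1)) := by
      simp only [map_sub]
      abel
    rw [e, norm_add_sq_real]
    have ecross : ⟪adjoint Bb yb1 + zb1 - cbk, adjoint Bb (yb - yb1) + (zb - zb1)⟫
        = ⟪Bb (adjoint Bb yb1 + zb1 - cbk), yb - yb1⟫ + ⟪adjoint Bb yb1 + zb1 - cbk, zb - zb1⟫ := by
      rw [inner_add_right, ContinuousLinearMap.adjoint_inner_right]
    rw [ecross]
  -- ## 8. Inner-product forms of the G-vectors
  have hG1 : ∀ z : X, ⟪Δz - σ • (adjoint A (EA (A (z1 - z0))) + adjoint B (Minv (Bb (zb1 - zb0) + B (z1 - z0) + B (adjoint A (y1 - y0))))), z - z1⟫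
      = σ * ⟪adjoint A ytmp + adjoint B ybtmp - ck - -z1, -z - -z1⟫ + σ * ⟪adjoint A y1 + adjoint B yb1 + z1 - ck, z - z1⟫ := by
    intro z
    rw [F1]
    simp only [sub_neg_eq_add, inner_sub_left, inner_sub_right, inner_add_right,
      inner_neg_right, inner_neg_left, real_inner_smul_left]
    ring
  have hG2 : ∀ zb : Xb, ⟪Δzb - σ • adjoint Bb (Minv (Bb (zb1 - zb0) + B (z1 - z0) + B (adjoint A (y1 - y0)))), zb - zb1⟫
      = σ * ⟪adjoint Bb ybtmp - cbk - -zb1, -zb - -zb1⟫ + σ * ⟪adjoint Bb yb1 + zb1 - cbk, zb - zb1⟫ := by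
    intro zb
    rw [F2]
    simp only [sub_neg_eq_add, inner_sub_left, inner_sub_right, inner_add_right,
      inner_neg_right, inner_neg_left, real_inner_smul_left]
    ring
  have hG3 : ∀ y : Y, ⟪Δy - σ • (A (adjoint B (Minv (Bb (zb1 - zb0) + B (z1 - z0) + B (adjoint A (y1 - y0))))) + J (y1 - y0)), y - y1⟫
      = σ * ⟪A (adjoint A y1 + adjoint B yb1 + z1 - ck), y - y1⟫ - (⟪b, y⟫ - ⟪b, y1⟫) := by
    intro y
    rw [F3]
    simp only [inner_sub_left, inner_sub_right, real_inner_smul_left]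
    ring
  have hG4 : ∀ yb : Yb, ⟪Δyb - σ • Jb (yb1 - yb0), yb - yb1⟫
      = σ * ⟪B (adjoint A y1 + adjoint B yb1 + z1 - ck), yb - yb1⟫ + σ * ⟪Bb (adjoint Bb yb1 + zb1 - cbk), yb - yb1⟫ - (⟪bb, yb⟫ - ⟪bb, yb1⟫) := by
    intro yb
    rw [F4]
    simp only [inner_sub_left, inner_sub_right, inner_add_left, real_inner_smul_left]
    ring
  -- ## 9. The master inequality
  have master : ∀ (z : X) (zb : Xb) (y : Y) (yb : Yb),
      LsigALM σ K Kb b bb c cb A B Bb z1 zb1 y1 yb1 x0 xb0 +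
        ((⟪Δz - σ • (adjoint A (EA (A (z1 - z0))) + adjoint B (Minv (Bb (zb1 - zb0) + B (z1 - z0) + B (adjoint A (y1 - y0))))), z - z1⟫ + ⟪Δzb - σ • adjoint Bb (Minv (Bb (zb1 - zb0) + B (z1 - z0) + B (adjoint A (y1 - y0)))), zb - zb1⟫ + ⟪Δy - σ • (A (adjoint B (Minv (Bb (zb1 - zb0) + B (z1 - z0) + B (adjoint A (y1 - y0))))) + J (y1 - y0)), y - y1⟫ + ⟪Δyb - σ • Jb (yb1 - yb0), yb - yb1⟫ + σ/2 * (‖adjoint A (y - y1) + adjoint B (yb - yb1) + (z - z1)‖^2 + ‖adjoint Bb (yb - yb1) + (zb - zb1)‖^2) : ℝ) : EReal)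
      ≤ LsigALM σ K Kb b bb c cb A B Bb z zb y yb x0 xb0 := by
    intro z zb y yb
    rw [hL z zb y yb, hL z1 zb1 y1 yb1, hρ1, hρ2]
    refine le_trans (le_of_eq ?_)
      (add_le_add (add_le_add (hsub1 (-z)) (hsub2 (-zb))) (le_refl _))
    rw [← EReal.coe_add, ← EReal.coe_add, ← EReal.coe_add, ← EReal.coe_add, ← EReal.coe_add]
    rw [EReal.coe_eq_coe_iff]
    rw [hexp1 z y yb, hexp2 zb yb, hG1 z, hG2 zb, hG3 y, hG4 yb]
    ring
  -- ## 10. The quadratic identity for the sGS majorization term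
  have i1 : ∀ z : X, ⟪A (z - z0), EA (A (z - z0))⟫
      = ⟪A (z1 - z0), EA (A (z1 - z0))⟫
        + 2*⟪adjoint A (EA (A (z1 - z0))), z - z1⟫
        + ⟪A (z - z1), EA (A (z - z1))⟫ := by
    intro z
    have e : A (z - z0) = A (z1 - z0) + A (z - z1) := by
      rw [map_sub, map_sub, map_sub]
      abel
    have c1 : ⟪A (z1 - z0), EA (A (z - z1))⟫ = ⟪adjoint A (EA (A (z1 - z0))), z - z1⟫ := by
      rw [hEA_symm, ← ContinuousLinearMap.adjoint_inner_left A]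
    have c2 : ⟪A (z - z1), EA (A (z1 - z0))⟫ = ⟪adjoint A (EA (A (z1 - z0))), z - z1⟫ := by
      rw [real_inner_comm, ← ContinuousLinearMap.adjoint_inner_left A]
    rw [e, map_add, inner_add_left, inner_add_right, inner_add_right, c1, c2]
    ring
  have i2 : ∀ (z : X) (zb : Xb) (y : Y),
      ⟪Bb (zb - zb0) + B (z - z0) + B (adjoint A (y - y0)), Minv (Bb (zb - zb0) + B (z - z0) + B (adjoint A (y - y0)))⟫
      = ⟪Bb (zb1 - zb0) + B (z1 - z0) + B (adjoint A (y1 - y0)), Minv (Bb (zb1 - zb0) + B (z1 - z0) + B (adjoint A (y1 - y0)))⟫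
        + 2*(⟪adjoint B (Minv (Bb (zb1 - zb0) + B (z1 - z0) + B (adjoint A (y1 - y0)))), z - z1⟫ + ⟪adjoint Bb (Minv (Bb (zb1 - zb0) + B (z1 - z0) + B (adjoint A (y1 - y0)))), zb - zb1⟫
            + ⟪A (adjoint B (Minv (Bb (zb1 - zb0) + B (z1 - z0) + B (adjoint A (y1 - y0))))), y - y1⟫)
        + ⟪Bb (zb - zb1) + B (z - z1) + B (adjoint A (y - y1)), Minv (Bb (zb - zb1) + B (z - z1) + B (adjoint A (y - y1)))⟫ := by
    intro z zb y
    have e : (Bb (zb - zb0) + B (z - z0) + B (adjoint A (y - y0))) = (Bb (zb1 - zb0) + B (z1 - z0) + B (adjoint A (y1 - y0))) + (Bb (zb - zb1) + B (z - z1) + B (adjoint A (y - y1))) := by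
      simp only [map_sub]
      abel
    have c0 : ⟪Minv (Bb (zb1 - zb0) + B (z1 - z0) + B (adjoint A (y1 - y0))), Bb (zb - zb1) + B (z - z1) + B (adjoint A (y - y1))⟫
        = ⟪adjoint B (Minv (Bb (zb1 - zb0) + B (z1 - z0) + B (adjoint A (y1 - y0)))), z - z1⟫ + ⟪adjoint Bb (Minv (Bb (zb1 - zb0) + B (z1 - z0) + B (adjoint A (y1 - y0)))), zb - zb1⟫
          + ⟪A (adjoint B (Minv (Bb (zb1 - zb0) + B (z1 - z0) + B (adjoint A (y1 - y0))))), y - y1⟫ := by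
      rw [inner_add_right, inner_add_right]
      rw [← ContinuousLinearMap.adjoint_inner_left Bb, ← ContinuousLinearMap.adjoint_inner_left B,
        ← ContinuousLinearMap.adjoint_inner_left B, ContinuousLinearMap.adjoint_inner_right]
      ring
    have c1 : ⟪Bb (zb1 - zb0) + B (z1 - z0) + B (adjoint A (y1 - y0)), Minv (Bb (zb - zb1) + B (z - z1) + B (adjoint A (y - y1)))⟫
        = ⟪adjoint B (Minv (Bb (zb1 - zb0) + B (z1 - z0) + B (adjoint A (y1 - y0)))), z - z1⟫ + ⟪adjoint Bb (Minv (Bb (zb1 - zb0) + B (z1 - z0) + B (adjoint A (y1 - y0)))), zb - zb1⟫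
          + ⟪A (adjoint B (Minv (Bb (zb1 - zb0) + B (z1 - z0) + B (adjoint A (y1 - y0))))), y - y1⟫ := by
      rw [hMinv_symm, c0]
    have c2 : ⟪Bb (zb - zb1) + B (z - z1) + B (adjoint A (y - y1)), Minv (Bb (zb1 - zb0) + B (z1 - z0) + B (adjoint A (y1 - y0)))⟫
        = ⟪adjoint B (Minv (Bb (zb1 - zb0) + B (z1 - z0) + B (adjoint A (y1 - y0)))), z - z1⟫ + ⟪adjoint Bb (Minv (Bb (zb1 - zb0) + B (z1 - z0) + B (adjoint A (y1 - y0)))), zb - zb1⟫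
          + ⟪A (adjoint B (Minv (Bb (zb1 - zb0) + B (z1 - z0) + B (adjoint A (y1 - y0))))), y - y1⟫ := by
      rw [real_inner_comm, c0]
    rw [e, map_add, inner_add_left, inner_add_right, inner_add_right, c1, c2]
    ring
  have i3 : ∀ y : Y, ⟪y - y0, J (y - y0)⟫
      = ⟪y1 - y0, J (y1 - y0)⟫ + 2*⟪J (y1 - y0), y - y1⟫ + ⟪y - y1, J (y - y1)⟫ := by
    intro y
    have e : y - y0 = (y1 - y0) + (y - y1) := by abel
    have c1 : ⟪y1 - y0, J (y - y1)⟫ = ⟪J (y1 - y0), y - y1⟫ := hJ_symm _ _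
    have c2 : ⟪y - y1, J (y1 - y0)⟫ = ⟪J (y1 - y0), y - y1⟫ := real_inner_comm _ _
    rw [e, map_add, inner_add_left, inner_add_right, inner_add_right, c1, c2]
    ring
  have i4 : ∀ yb : Yb, ⟪yb - yb0, Jb (yb - yb0)⟫
      = ⟪yb1 - yb0, Jb (yb1 - yb0)⟫ + 2*⟪Jb (yb1 - yb0), yb - yb1⟫
        + ⟪yb - yb1, Jb (yb - yb1)⟫ := by
    intro yb
    have e : yb - yb0 = (yb1 - yb0) + (yb - yb1) := by abel
    have c1 : ⟪yb1 - yb0, Jb (yb - yb1)⟫ = ⟪Jb (yb1 - yb0), yb - yb1⟫ := hJb_symm _ _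
    have c2 : ⟪yb - yb1, Jb (yb1 - yb0)⟫ = ⟪Jb (yb1 - yb0), yb - yb1⟫ := real_inner_comm _ _
    rw [e, map_add, inner_add_left, inner_add_right, inner_add_right, c1, c2]
    ring
  have hQid : ∀ (z : X) (zb : Xb) (y : Y) (yb : Yb),
      (⟪Δz - σ • (adjoint A (EA (A (z1 - z0))) + adjoint B (Minv (Bb (zb1 - zb0) + B (z1 - z0) + B (adjoint A (y1 - y0))))), z - z1⟫ + ⟪Δzb - σ • adjoint Bb (Minv (Bb (zb1 - zb0) + B (z1 - z0) + B (adjoint A (y1 - y0)))), zb - zb1⟫ + ⟪Δy - σ • (A (adjoint B (Minv (Bb (zb1 - zb0) + B (z1 - z0) + B (adjoint A (y1 - y0))))) + J (y1 - y0)), y - y1⟫ + ⟪Δyb - σ • Jb (yb1 - yb0), yb - yb1⟫)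
      + (σ/2 * (⟪A (z - z0), EA (A (z - z0))⟫ + ⟪Bb (zb - zb0) + B (z - z0) + B (adjoint A (y - y0)), Minv (Bb (zb - zb0) + B (z - z0) + B (adjoint A (y - y0)))⟫ + ⟪y - y0, J (y - y0)⟫ + ⟪yb - yb0, Jb (yb - yb0)⟫) - (⟪Δzb, zb⟫ + ⟪Δz, z⟫ + ⟪Δy, y⟫ + ⟪Δyb, yb⟫))
      - (σ/2 * (⟪A (z1 - z0), EA (A (z1 - z0))⟫ + ⟪Bb (zb1 - zb0) + B (z1 - z0) + B (adjoint A (y1 - y0)), Minv (Bb (zb1 - zb0) + B (z1 - z0) + B (adjoint A (y1 - y0)))⟫ + ⟪y1 - y0, J (y1 - y0)⟫ + ⟪yb1 - yb0, Jb (yb1 - yb0)⟫) - (⟪Δzb, zb1⟫ + ⟪Δz, z1⟫ + ⟪Δy, y1⟫ + ⟪Δyb, yb1⟫))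
      = σ/2 * (⟪A (z - z1), EA (A (z - z1))⟫ + ⟪Bb (zb - zb1) + B (z - z1) + B (adjoint A (y - y1)), Minv (Bb (zb - zb1) + B (z - z1) + B (adjoint A (y - y1)))⟫ + ⟪y - y1, J (y - y1)⟫ + ⟪yb - yb1, Jb (yb - yb1)⟫) := by
    intro z zb y yb
    rw [i1 z, i2 z zb y, i3 y, i4 yb]
    simp only [inner_sub_left, inner_sub_right, inner_add_left, inner_add_right,
      real_inner_smul_left]
    ring
  -- ## 11. Nonnegativity of the sGS quadratic form
  have hQsumpos : ∀ (z : X) (zb : Xb) (y : Y) (yb : Yb), 0 ≤ (⟪A (z - z1), EA (A (z - z1))⟫ + ⟪Bb (zb - zb1) + B (z - z1) + B (adjoint A (y - y1)), Minv (Bb (zb - zb1) + B (z - z1) + B (adjoint A (y - y1)))⟫ + ⟪y - y1, J (y - y1)⟫ + ⟪yb - yb1, Jb (yb - yb1)⟫) := by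
    intro z zb y yb
    have n1 := hEApsd (A (z - z1))
    have n2 := hMinvpsd (Bb (zb - zb1) + B (z - z1) + B (adjoint A (y - y1)))
    have n3 := hJpsd (y - y1)
    have n4 := hJbpsd (yb - yb1)
    linarith
  -- ## 12. FW at the iterate, and the global lower bound
  have hFWw1 : FW z1 zb1 y1 yb1 = ((ρ1 + ρ2 + (- ⟪b, y1⟫ - ⟪bb, yb1⟫ - 1/(2*σ) * ‖x0‖^2 - 1/(2*σ) * ‖xb0‖^2 + σ/2 * ‖adjoint A y1 + adjoint B yb1 + z1 - ck‖^2 + σ/2 * ‖adjoint Bb yb1 + zb1 - cbk‖^2) + (σ/2 * (⟪A (z1 - z0), EA (A (z1 - z0))⟫ + ⟪Bb (zb1 - zb0) + B (z1 - z0) + B (adjoint A (y1 - y0)), Minv (Bb (zb1 - zb0) + B (z1 - z0) + B (adjoint A (y1 - y0)))⟫ + ⟪y1 - y0, J (y1 - y0)⟫ + ⟪yb1 - yb0, Jb (yb1 - yb0)⟫) - (⟪Δzb, zb1⟫ + ⟪Δz, z1⟫ + ⟪Δy, y1⟫ + ⟪Δyb, yb1⟫)) : ℝ) : EReal) := by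
    rw [hFW, hL, hρ1, hρ2]
    rw [← EReal.coe_add, ← EReal.coe_add, ← EReal.coe_add]
  have hlowchain : ∀ (z : X) (zb : Xb) (y : Y) (yb : Yb),
      ((ρ1 + ρ2 + (- ⟪b, y1⟫ - ⟪bb, yb1⟫ - 1/(2*σ) * ‖x0‖^2 - 1/(2*σ) * ‖xb0‖^2 + σ/2 * ‖adjoint A y1 + adjoint B yb1 + z1 - ck‖^2 + σ/2 * ‖adjoint Bb yb1 + zb1 - cbk‖^2) + ((⟪Δz - σ • (adjoint A (EA (A (z1 - z0))) + adjoint B (Minv (Bb (zb1 - zb0) + B (z1 - z0) + B (adjoint A (y1 - y0))))), z - z1⟫ + ⟪Δzb - σ • adjoint Bb (Minv (Bb (zb1 - zb0) + B (z1 - z0) + B (adjoint A (y1 - y0)))), zb - zb1⟫ + ⟪Δy - σ • (A (adjoint B (Minv (Bb (zb1 - zb0) + B (z1 - z0) + B (adjoint A (y1 - y0))))) + J (y1 - y0)), y - y1⟫ + ⟪Δyb - σ • Jb (yb1 - yb0), yb - yb1⟫ + σ/2 * (‖adjoint A (y - y1) + adjoint B (yb - yb1) + (z - z1)‖^2 +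 ‖adjoint Bb (yb - yb1) + (zb - zb1)‖^2)) + (σ/2 * (⟪A (z - z0), EA (A (z - z0))⟫ + ⟪Bb (zb - zb0) + B (z - z0) + B (adjoint A (y - y0)), Minv (Bb (zb - zb0) + B (z - z0) + B (adjoint A (y - y0)))⟫ + ⟪y - y0, J (y - y0)⟫ + ⟪yb - yb0, Jb (yb - yb0)⟫) - (⟪Δzb, zb⟫ + ⟪Δz, z⟫ + ⟪Δy, y⟫ + ⟪Δyb, yb⟫))) : ℝ) : EReal) ≤ FW z zb y yb := by
    intro z zb y yb
    rw [hFW]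
    have h1 : ((ρ1 + ρ2 + (- ⟪b, y1⟫ - ⟪bb, yb1⟫ - 1/(2*σ) * ‖x0‖^2 - 1/(2*σ) * ‖xb0‖^2 + σ/2 * ‖adjoint A y1 + adjoint B yb1 + z1 - ck‖^2 + σ/2 * ‖adjoint Bb yb1 + zb1 - cbk‖^2) + (⟪Δz - σ • (adjoint A (EA (A (z1 - z0))) + adjoint B (Minv (Bb (zb1 - zb0) + B (z1 - z0) + B (adjoint A (y1 - y0))))), z - z1⟫ + ⟪Δzb - σ • adjoint Bb (Minv (Bb (zb1 - zb0) + B (z1 - z0) + B (adjoint A (y1 - y0)))), zb - zb1⟫ + ⟪Δy - σ • (A (adjoint B (Minv (Bb (zb1 - zb0) + B (z1 - z0) + B (adjoint A (y1 - y0))))) + J (y1 - y0)), y - y1⟫ + ⟪Δyb - σ • Jb (yb1 - yb0), yb - yb1⟫ + σ/2 * (‖adjoint A (y - y1) + adjoint B (yb - yb1) + (z - z1)‖^2 + ‖adjoint Bb (yb - yb1) + (zb - zb1)‖^2)) : ℝ) : EReal)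
        ≤ LsigALM σ K Kb b bb c cb A B Bb z zb y yb x0 xb0 := by
      have hm := master z zb y yb
      rw [hL z1 zb1 y1 yb1, hρ1, hρ2] at hm
      rw [← EReal.coe_add, ← EReal.coe_add, ← EReal.coe_add] at hm
      exact hm
    calc ((ρ1 + ρ2 + (- ⟪b, y1⟫ - ⟪bb, yb1⟫ - 1/(2*σ) * ‖x0‖^2 - 1/(2*σ) * ‖xb0‖^2 + σ/2 * ‖adjoint A y1 + adjoint B yb1 + z1 - ck‖^2 + σ/2 * ‖adjoint Bb yb1 + zb1 - cbk‖^2) + ((⟪Δz - σ • (adjoint A (EA (A (z1 - z0))) + adjoint B (Minv (Bb (zb1 - zb0) + B (z1 - z0) + B (adjoint A (y1 - y0))))), z - z1⟫ + ⟪Δzb - σ • adjoint Bb (Minv (Bb (zb1 - zb0) + B (z1 - z0) + B (adjoint A (y1 - y0)))), zb - zb1⟫ + ⟪Δy - σ • (A (adjoint B (Minv (Bb (zb1 - zb0) + B (z1 - z0) + B (adjoint A (y1 - y0))))) + J (y1 - y0)), y - y1⟫ + ⟪Δyb - σ • Jb (yb1 - yb0), yb - yb1⟫ + σ/2 * (‖adjoint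 A (y - y1) + adjoint B (yb - yb1) + (z - z1)‖^2 + ‖adjoint Bb (yb - yb1) + (zb - zb1)‖^2)) + (σ/2 * (⟪A (z - z0), EA (A (z - z0))⟫ + ⟪Bb (zb - zb0) + B (z - z0) + B (adjoint A (y - y0)), Minv (Bb (zb - zb0) + B (z - z0) + B (adjoint A (y - y0)))⟫ + ⟪y - y0, J (y - y0)⟫ + ⟪yb - yb0, Jb (yb - yb0)⟫) - (⟪Δzb, zb⟫ + ⟪Δz, z⟫ + ⟪Δy, y⟫ + ⟪Δyb, yb⟫))) : ℝ) : EReal)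
        = ((ρ1 + ρ2 + (- ⟪b, y1⟫ - ⟪bb, yb1⟫ - 1/(2*σ) * ‖x0‖^2 - 1/(2*σ) * ‖xb0‖^2 + σ/2 * ‖adjoint A y1 + adjoint B yb1 + z1 - ck‖^2 + σ/2 * ‖adjoint Bb yb1 + zb1 - cbk‖^2) + (⟪Δz - σ • (adjoint A (EA (A (z1 - z0))) + adjoint B (Minv (Bb (zb1 - zb0) + B (z1 - z0) + B (adjoint A (y1 - y0))))), z - z1⟫ + ⟪Δzb - σ • adjoint Bb (Minv (Bb (zb1 - zb0) + B (z1 - z0) + B (adjoint A (y1 - y0)))), zb - zb1⟫ + ⟪Δy - σ • (A (adjoint B (Minv (Bb (zb1 - zb0) + B (z1 - z0) + B (adjoint A (y1 - y0))))) + J (y1 - y0)), y - y1⟫ + ⟪Δyb - σ • Jb (yb1 - yb0), yb - yb1⟫ + σ/2 * (‖adjoint A (y - y1) + adjoint B (yb - yb1) + (z - z1)‖^2 + ‖adjoint Bb (yb - yb1) + (zb - zb1)‖^2)) : ℝ) : EReal) + (((σ/2 * (⟪A (z - z0), EA (A (z - z0))⟫ + ⟪Bb (zb - zb0) + B (z -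 z0) + B (adjoint A (y - y0)), Minv (Bb (zb - zb0) + B (z - z0) + B (adjoint A (y - y0)))⟫ + ⟪y - y0, J (y - y0)⟫ + ⟪yb - yb0, Jb (yb - yb0)⟫) - (⟪Δzb, zb⟫ + ⟪Δz, z⟫ + ⟪Δy, y⟫ + ⟪Δyb, yb⟫)) : ℝ) : EReal) := by
          rw [← EReal.coe_add]
          norm_cast
          ring
      _ ≤ LsigALM σ K Kb b bb c cb A B Bb z zb y yb x0 xb0 + (((σ/2 * (⟪A (z - z0), EA (A (z - z0))⟫ + ⟪Bb (zb - zb0) + B (z - z0) + B (adjoint A (y - y0)), Minv (Bb (zb - zb0) + B (z - z0) + B (adjoint A (y - y0)))⟫ + ⟪y - y0, J (y - y0)⟫ + ⟪yb - yb0, Jb (yb - yb0)⟫) - (⟪Δzb, zb⟫ + ⟪Δz, z⟫ + ⟪Δy, y⟫ + ⟪Δyb, yb⟫)) : ℝ) : EReal) :=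
          add_le_add h1 (le_refl _)
  -- ## 13. Conclusion
  refine ⟨⟨?_, ?_⟩, ?_⟩
  · -- minimality of w^(k+1)
    intro z zb y yb
    rw [hFWw1]
    refine le_trans ?_ (hlowchain z zb y yb)
    rw [EReal.coe_le_coe_iff]
    have hq := hQid z zb y yb
    have hqs := hQsumpos z zb y yb
    have ht1 : (0:ℝ) ≤ ‖adjoint A (y - y1) + adjoint B (yb - yb1) + (z - z1)‖^2 := sq_nonneg _
    have ht2 : (0:ℝ) ≤ ‖adjoint Bb (yb - yb1) + (zb - zb1)‖^2 := sq_nonneg _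
    have h0 : (0:ℝ) ≤ σ/2 * (⟪A (z - z1), EA (A (z - z1))⟫ + ⟪Bb (zb - zb1) + B (z - z1) + B (adjoint A (y - y1)), Minv (Bb (zb - zb1) + B (z - z1) + B (adjoint A (y - y1)))⟫ + ⟪y - y1, J (y - y1)⟫ + ⟪yb - yb1, Jb (yb - yb1)⟫) := mul_nonneg (by linarith) hqs
    have h1 : (0:ℝ) ≤ σ/2 * (‖adjoint A (y - y1) + adjoint B (yb - yb1) + (z - z1)‖^2 + ‖adjoint Bb (yb - yb1) + (zb - zb1)‖^2) := mul_nonneg (by linarith) (by linarith)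
    linarith [hq, h0, h1]
  · -- uniqueness
    intro z zb y yb hmin2
    have hle := le_trans (hlowchain z zb y yb) (hmin2 z1 zb1 y1 yb1)
    rw [hFWw1, EReal.coe_le_coe_iff] at hle
    have hq := hQid z zb y yb
    have hqs := hQsumpos z zb y yb
    have ht1 : (0:ℝ) ≤ ‖adjoint A (y - y1) + adjoint B (yb - yb1) + (z - z1)‖^2 := sq_nonneg _
    have ht2 : (0:ℝ) ≤ ‖adjoint Bb (yb - yb1) + (zb - zb1)‖^2 := sq_nonneg _
    have n1 := hEApsd (A (z - z1))
    have n2 := hMinvpsd (Bb (zb - zb1) + B (z - z1) + B (adjoint A (y - y1)))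
    have n3 := hJpsd (y - y1)
    have n4 := hJbpsd (yb - yb1)
    have hσ2 : (0:ℝ) < σ/2 := by linarith
    -- the total quadratic vanishes
    have hzero : (⟪A (z - z1), EA (A (z - z1))⟫ + ⟪Bb (zb - zb1) + B (z - z1) + B (adjoint A (y - y1)), Minv (Bb (zb - zb1) + B (z - z1) + B (adjoint A (y - y1)))⟫ + ⟪y - y1, J (y - y1)⟫ + ⟪yb - yb1, Jb (yb - yb1)⟫) + (‖adjoint A (y - y1) + adjoint B (yb - yb1) + (z - z1)‖^2) + (‖adjoint Bb (yb - yb1) + (zb - zb1)‖^2) ≤ 0 := by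
      by_contra hpos
      push_neg at hpos
      have hmp := mul_pos hσ2 hpos
      have hr : σ/2 * ((⟪A (z - z1), EA (A (z - z1))⟫ + ⟪Bb (zb - zb1) + B (z - z1) + B (adjoint A (y - y1)), Minv (Bb (zb - zb1) + B (z - z1) + B (adjoint A (y - y1)))⟫ + ⟪y - y1, J (y - y1)⟫ + ⟪yb - yb1, Jb (yb - yb1)⟫) + (‖adjoint A (y - y1) + adjoint B (yb - yb1) + (z - z1)‖^2) + (‖adjoint Bb (yb - yb1) + (zb - zb1)‖^2))
          = σ/2 * (⟪A (z - z1), EA (A (z - z1))⟫ + ⟪Bb (zb - zb1) + B (z - z1) + B (adjoint A (y - y1)), Minv (Bb (zb - zb1) + B (z - z1) + B (adjoint A (y - y1)))⟫ + ⟪y - y1, J (y - y1)⟫ + ⟪yb - yb1, Jb (yb - yb1)⟫) + σ/2 * (‖adjoint A (y - y1) + adjoint B (yb - yb1) + (z - z1)‖^2 + ‖adjoint Bb (yb - yb1) + (zb - zb1)‖^2) := by ring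
      linarith [hle, hq, hmp, hr]
    have hT1z : (‖adjoint A (y - y1) + adjoint B (yb - yb1) + (z - z1)‖^2) = 0 := by linarith
    have hT2z : (‖adjoint Bb (yb - yb1) + (zb - zb1)‖^2) = 0 := by linarith
    have hq1z : ⟪A (z - z1), EA (A (z - z1))⟫ = 0 := by linarith
    have hq2z : ⟪Bb (zb - zb1) + B (z - z1) + B (adjoint A (y - y1)), Minv (Bb (zb - zb1) + B (z - z1) + B (adjoint A (y - y1)))⟫ = 0 := by linarith
    have hq3z : ⟪y - y1, J (y - y1)⟫ = 0 := by linarith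
    have hq4z : ⟪yb - yb1, Jb (yb - yb1)⟫ = 0 := by linarith
    -- extract vector equations
    have hv1 : adjoint A (y - y1) + adjoint B (yb - yb1) + (z - z1) = 0 := by
      have := (pow_eq_zero_iff (two_ne_zero)).mp hT1z
      exact norm_eq_zero.mp this
    have hv2 : adjoint Bb (yb - yb1) + (zb - zb1) = 0 := by
      have := (pow_eq_zero_iff (two_ne_zero)).mp hT2z
      exact norm_eq_zero.mp this
    have hAz : A (z - z1) = 0 := hEAzero _ hq1z
    have hgd : (Bb (zb - zb1) + B (z - z1) + B (adjoint A (y - y1))) = 0 := hMinvzero _ hq2z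
    -- block elimination
    have e1 : zb - zb1 = -(adjoint Bb (yb - yb1)) := eq_neg_of_add_eq_zero_right hv2
    have e2 : z - z1 = -(adjoint A (y - y1) + adjoint B (yb - yb1)) :=
      eq_neg_of_add_eq_zero_right hv1
    have h5 : B (adjoint B (yb - yb1)) + Bb (adjoint Bb (yb - yb1)) = 0 := by
      have e3 : (Bb (zb - zb1) + B (z - z1) + B (adjoint A (y - y1))) = -(B (adjoint B (yb - yb1)) + Bb (adjoint Bb (yb - yb1))) := by
        rw [e1, e2]
        simp only [map_neg, map_add]
        abel
      rw [e3] at hgd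
      exact neg_eq_zero.mp hgd
    have h6 : ⟪yb - yb1, M (yb - yb1)⟫ = 0 := by
      rw [hMu, h5, zero_add]
      exact hq4z
    have hdyb : yb - yb1 = 0 := by
      by_contra hne
      exact absurd h6 (ne_of_gt (hDνpd _ hne))
    have hdzb : zb - zb1 = 0 := by
      rw [e1, hdyb, map_zero, neg_zero]
    have hAAy : A (adjoint A (y - y1)) = 0 := by
      have : z - z1 = -(adjoint A (y - y1)) := by
        rw [e2, hdyb, map_zero, add_zero]
      rw [this, map_neg, neg_eq_zero] at hAz
      exact hAz
    have hdy : y - y1 = 0 := by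
      by_contra hne
      have := hDμpd (y - y1) hne
      rw [hAAy, zero_add] at this
      exact absurd hq3z (ne_of_gt this)
    have hdz : z - z1 = 0 := by
      rw [e2, hdy, hdyb, map_zero, map_zero, add_zero, neg_zero]
    exact ⟨sub_eq_zero.mp hdz, sub_eq_zero.mp hdzb, sub_eq_zero.mp hdy, sub_eq_zero.mp hdyb⟩
  · -- the subgradient inequality
    intro z zb y yb
    refine le_trans ?_ (master z zb y yb)
    refine add_le_add (le_refl _) ?_
    rw [EReal.coe_le_coe_iff]
    have ht1 : (0:ℝ) ≤ ‖adjoint A (y - y1) + adjoint B (yb - yb1) + (z - z1)‖^2 := sq_nonneg _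
    have ht2 : (0:ℝ) ≤ ‖adjoint Bb (yb - yb1) + (zb - zb1)‖^2 := sq_nonneg _
    have h1 : (0:ℝ) ≤ σ/2 * (‖adjoint A (y - y1) + adjoint B (yb - yb1) + (z - z1)‖^2 + ‖adjoint Bb (yb - yb1) + (zb - zb1)‖^2) := mul_nonneg (by linarith) (by linarith)
    linarith [h1]


end
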